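/- Let Φ : [t₀,∞) → ℝ^{b×b} be symmetric, piecewise continuous and bounded with Φ̄ = sup_{t≥t₀} ‖Φ(t)‖, and suppose ∫_t^{t+T₁} Φ(s) ds ⪰ α₁·I_b for all t ≥ t₀ with α₁, T₁ > 0. Then every solution x of ẋ = −Φ(t)x satisfies ‖x(t+T₁)‖² ≤ (1 − 2α₁/(1 + Φ̄T₁)²) · ‖x(t)‖² for all t ≥ t₀. -/

import Mathlib

/-!
Along a solution, `d/dt ‖x‖² = -2 xᵀΦx`, so over a window `‖x(t+T₁)‖² = ‖x(t)‖² - 2K` with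
`K = ∫ xᵀΦx`, while persistent excitation gives `α₁‖x(t)‖² ≤ ∫ x(t)ᵀΦ(s)x(t) ds`. It remains to
compare the last integral with `K`. Since `‖ẋ‖ ≤ √Φ̄ · √(xᵀΦx)`, during the window the state moves
by at most `√Φ̄ · I` with `I = ∫ √(xᵀΦx)`, so the triangle inequality for the seminorm
`v ↦ √(vᵀΦ(s)v)` gives `√(x(t)ᵀΦ(s)x(t)) ≤ √(x(s)ᵀΦ(s)x(s)) + Φ̄ I`. Squaring, integrating and
using Cauchy–Schwarz `I² ≤ T₁ K` yields `∫ x(t)ᵀΦ(s)x(t) ds ≤ (1 + Φ̄T₁)² K`.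
-/

open Matrix MeasureTheory Set
open WithLp (toLp)
open scoped RealInnerProductSpace

variable {n : Type*} [Fintype n]

theorem EuclideanSpace.norm_toLp_sq (v : n → ℝ) : ‖toLp 2 v‖ ^ 2 = v ⬝ᵥ v := by
  rw [← real_inner_self_eq_norm_sq, EuclideanSpace.inner_toLp_toLp, star_trivial]

namespace Matrix.PosSemidef

variable {A : Matrix n n ℝ} {C : ℝ}

theorem exists_dotProduct_mulVec_eq_inner (hA : A.PosSemidef) :
    ∃ B : Matrix n n ℝ, ∀ u v : n → ℝ,
      u ⬝ᵥ A *ᵥ v = ⟪toLp 2 (B *ᵥ u), toLp 2 (B *ᵥ v)⟫ := by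
  classical
  open scoped MatrixOrder in
  obtain ⟨B, rfl⟩ := CStarAlgebra.nonneg_iff_eq_star_mul_self.mp hA.nonneg
  refine ⟨B, fun u v => ?_⟩
  rw [EuclideanSpace.inner_toLp_toLp, ← mulVec_mulVec, dotProduct_mulVec, star_eq_conjTranspose,
    conjTranspose_eq_transpose_of_trivial, vecMul_transpose, star_trivial, dotProduct_comm]

theorem dotProduct_mulVec_le_sqrt_mul_sqrt (hA : A.PosSemidef) (u v : n → ℝ) :
    u ⬝ᵥ A *ᵥ v ≤ √(u ⬝ᵥ A *ᵥ u) * √(v ⬝ᵥ A *ᵥ v) := by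
  obtain ⟨B, hB⟩ := hA.exists_dotProduct_mulVec_eq_inner
  simp only [hB, real_inner_self_eq_norm_sq, Real.sqrt_sq (norm_nonneg _)]
  exact real_inner_le_norm _ _

theorem sqrt_dotProduct_mulVec_add_le (hA : A.PosSemidef) (u v : n → ℝ) :
    √((u + v) ⬝ᵥ A *ᵥ (u + v)) ≤ √(u ⬝ᵥ A *ᵥ u) + √(v ⬝ᵥ A *ᵥ v) := by
  obtain ⟨B, hB⟩ := hA.exists_dotProduct_mulVec_eq_inner
  have hnorm (w : n → ℝ) : √(w ⬝ᵥ A *ᵥ w) = ‖toLp 2 (B *ᵥ w)‖ := by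
    rw [hB, real_inner_self_eq_norm_sq, Real.sqrt_sq (norm_nonneg _)]
  rw [hnorm, hnorm, hnorm, mulVec_add, WithLp.toLp_add]
  exact norm_add_le _ _

theorem norm_mulVec_le (hA : A.PosSemidef) (hAC : ∀ v, v ⬝ᵥ A *ᵥ v ≤ C * (v ⬝ᵥ v))
    (v : n → ℝ) : ‖toLp 2 (A *ᵥ v)‖ ≤ √C * √(v ⬝ᵥ A *ᵥ v) := by
  set w := A *ᵥ v
  have h : ‖toLp 2 w‖ * ‖toLp 2 w‖ ≤ ‖toLp 2 w‖ * (√C * √(v ⬝ᵥ A *ᵥ v)) := by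
    calc ‖toLp 2 w‖ * ‖toLp 2 w‖ = w ⬝ᵥ A *ᵥ v := by
          rw [← sq, EuclideanSpace.norm_toLp_sq]
      _ ≤ √(w ⬝ᵥ A *ᵥ w) * √(v ⬝ᵥ A *ᵥ v) := hA.dotProduct_mulVec_le_sqrt_mul_sqrt w v
      _ ≤ √(C * (w ⬝ᵥ w)) * √(v ⬝ᵥ A *ᵥ v) := by gcongr; exact hAC w
      _ = ‖toLp 2 w‖ * (√C * √(v ⬝ᵥ A *ᵥ v)) := by
          rw [← EuclideanSpace.norm_toLp_sq, Real.sqrt_mul' _ (sq_nonneg _),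
            Real.sqrt_sq (norm_nonneg _)]
          ring
  rcases (norm_nonneg (toLp 2 w)).eq_or_lt with h0 | hpos
  · rw [← h0]; positivity
  · exact le_of_mul_le_mul_left h hpos

theorem abs_apply_le (hA : A.PosSemidef) (hAC : ∀ v, v ⬝ᵥ A *ᵥ v ≤ C * (v ⬝ᵥ v)) (i j : n) :
    |A i j| ≤ C := by
  classical
  have hdiag : A j j ≤ C := by
    simpa [mulVec_single_one, single_one_dotProduct] using hAC (Pi.single j 1)
  have hC : 0 ≤ C := hA.diag_nonneg.trans hdiag
  calc |A i j| = ‖(toLp 2 (A *ᵥ Pi.single j 1)).ofLp i‖ := by simp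
    _ ≤ ‖toLp 2 (A *ᵥ Pi.single j 1)‖ := PiLp.norm_apply_le _ i
    _ ≤ √C * √(A j j) := by
        simpa [mulVec_single_one, single_one_dotProduct] using hA.norm_mulVec_le hAC (Pi.single j 1)
    _ ≤ √C * √C := by gcongr
    _ = C := Real.mul_self_sqrt hC

theorem sqrt_dotProduct_mulVec_le_add (hA : A.PosSemidef)
    (hAC : ∀ v, v ⬝ᵥ A *ᵥ v ≤ C * (v ⬝ᵥ v)) (u v : n → ℝ) :
    √(u ⬝ᵥ A *ᵥ u) ≤ √(v ⬝ᵥ A *ᵥ v) + √C * ‖toLp 2 (u - v)‖ := by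
  calc √(u ⬝ᵥ A *ᵥ u) = √((v + (u - v)) ⬝ᵥ A *ᵥ (v + (u - v))) := by rw [add_sub_cancel]
    _ ≤ √(v ⬝ᵥ A *ᵥ v) + √((u - v) ⬝ᵥ A *ᵥ (u - v)) := hA.sqrt_dotProduct_mulVec_add_le _ _
    _ ≤ √(v ⬝ᵥ A *ᵥ v) + √(C * ((u - v) ⬝ᵥ (u - v))) := by gcongr; exact hAC _
    _ = √(v ⬝ᵥ A *ᵥ v) + √C * ‖toLp 2 (u - v)‖ := by
        rw [← EuclideanSpace.norm_toLp_sq, Real.sqrt_mul' _ (sq_nonneg _),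
          Real.sqrt_sq (norm_nonneg _)]

theorem mul_dotProduct_self_le [DecidableEq n] (hA : (A - C • (1 : Matrix n n ℝ)).PosSemidef)
    (v : n → ℝ) : C * (v ⬝ᵥ v) ≤ v ⬝ᵥ A *ᵥ v := by
  have hv := hA.dotProduct_mulVec_nonneg v
  simp only [star_trivial, sub_mulVec, smul_mulVec, one_mulVec, dotProduct_sub,
    dotProduct_smul, smul_eq_mul] at hv
  linarith

end Matrix.PosSemidef

theorem HasDerivAt.toLp {f : ℝ → n → ℝ} {f' : n → ℝ} {t : ℝ} (hf : HasDerivAt f f' t) :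
    HasDerivAt (fun s => toLp 2 (f s)) (toLp 2 f') t :=
  (PiLp.continuousLinearEquiv 2 ℝ fun _ : n => ℝ).symm.hasFDerivAt.comp_hasDerivAt t hf

theorem IntervalIntegrable.of_bound {E : Type*} [NormedAddCommGroup E] {f : ℝ → E} {a b M : ℝ}
    (hab : a ≤ b) (hf : AEStronglyMeasurable f (volume.restrict (Ioc a b)))
    (hM : ∀ s ∈ Icc a b, ‖f s‖ ≤ M) : IntervalIntegrable f volume a b := by
  rw [← uIoc_of_le hab] at hf
  refine (intervalIntegrable_const (c := M)).mono_fun' hf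
    (ae_restrict_of_forall_mem measurableSet_uIoc fun s hs => hM s ?_)
  rw [uIoc_of_le hab] at hs
  exact Ioc_subset_Icc_self hs

theorem IntervalIntegrable.sqrt {f : ℝ → ℝ} {a b : ℝ} (hf : IntervalIntegrable f volume a b) :
    IntervalIntegrable (fun s => √(f s)) volume a b := by
  refine (hf.abs.add (intervalIntegrable_const (c := 1))).mono_fun'
    (Real.continuous_sqrt.comp_aestronglyMeasurable hf.def'.1) (ae_of_all _ fun s => ?_)
  dsimp only
  rw [Real.norm_of_nonneg (Real.sqrt_nonneg _)]
  exact Real.sqrt_le_iff.mpr ⟨by positivity, by nlinarith [abs_nonneg (f s), le_abs_self (f s)]⟩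

namespace intervalIntegral

variable {f : ℝ → ℝ} {a b : ℝ}

theorem integral_sq_add_mul_add_const (hf : IntervalIntegrable f volume a b)
    (hf2 : IntervalIntegrable (fun s => f s ^ 2) volume a b) (c d : ℝ) :
    ∫ s in a..b, (f s ^ 2 + c * f s + d) =
      (∫ s in a..b, f s ^ 2) + c * (∫ s in a..b, f s) + d * (b - a) := by
  rw [integral_add (hf2.add (hf.const_mul c)) intervalIntegrable_const,
    integral_add hf2 (hf.const_mul c), integral_const_mul, integral_const, smul_eq_mul, mul_comm d]

theorem sq_integral_le (hab : a ≤ b) (hf : IntervalIntegrable f volume a b)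
    (hf2 : IntervalIntegrable (fun s => f s ^ 2) volume a b) :
    (∫ s in a..b, f s) ^ 2 ≤ (b - a) * ∫ s in a..b, f s ^ 2 := by
  have hquad : ∀ l : ℝ, 0 ≤ (b - a) * (l * l) + (-2 * ∫ s in a..b, f s) * l
      + ∫ s in a..b, f s ^ 2 := by
    intro l
    have h := integral_sq_add_mul_add_const hf hf2 (-2 * l) (l ^ 2)
    have hnonneg : 0 ≤ ∫ s in a..b, (f s ^ 2 + -2 * l * f s + l ^ 2) := by
      refine integral_nonneg hab fun s _ => ?_
      nlinarith [sq_nonneg (f s - l)]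
    linarith
  have hdisc := discrim_le_zero hquad
  rw [discrim] at hdisc
  linarith

theorem integral_dotProduct_mulVec {A : ℝ → Matrix n n ℝ} {μ : Measure ℝ}
    (hA : ∀ i j, IntervalIntegrable (fun s => A s i j) μ a b) (u v : n → ℝ) :
    ∫ s in a..b, u ⬝ᵥ A s *ᵥ v ∂μ = u ⬝ᵥ (of fun i j => ∫ s in a..b, A s i j ∂μ) *ᵥ v := by
  have hrow : ∀ i, IntervalIntegrable (fun s => ∑ j, A s i j * v j) μ a b := fun i => by
    simpa only [Finset.sum_fn] using
      IntervalIntegrable.sum Finset.univ fun j _ => (hA i j).mul_const (v j)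
  simp only [dotProduct, mulVec, of_apply]
  rw [integral_finsetSum fun i _ => (hrow i).const_mul _]
  refine Finset.sum_congr rfl fun i _ => ?_
  rw [integral_const_mul, integral_finsetSum fun j _ => (hA i j).mul_const _]
  simp only [integral_mul_const]

end intervalIntegral

section LinearODE

variable {A : ℝ → Matrix n n ℝ} {x : ℝ → n → ℝ} {a b C : ℝ}

theorem intervalIntegrable_dotProduct_mulVec (hab : a ≤ b)
    (hA : ∀ s ∈ Icc a b, (A s).PosSemidef)
    (hAC : ∀ s ∈ Icc a b, ∀ v, v ⬝ᵥ A s *ᵥ v ≤ C * (v ⬝ᵥ v))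
    (hmeas : ∀ i j, Measurable fun s => A s i j) (hx : ContinuousOn x (Icc a b)) :
    IntervalIntegrable (fun s => x s ⬝ᵥ A s *ᵥ x s) volume a b := by
  obtain ⟨M, hM⟩ := isCompact_Icc.exists_bound_of_continuousOn
    (f := fun s => C * (x s ⬝ᵥ x s)) (by fun_prop)
  refine .of_bound (M := M) hab ?_ fun s hs => ?_
  · have hxm : ∀ i, AEMeasurable (fun s => x s i) (volume.restrict (Ioc a b)) := fun i =>
      ((continuous_apply i).comp_continuousOn hx).aemeasurable measurableSet_Icc |>.mono_set
        Ioc_subset_Icc_self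
    simp only [dotProduct, mulVec]
    fun_prop
  · rw [Real.norm_of_nonneg (by simpa using (hA s hs).dotProduct_mulVec_nonneg (x s))]
    exact (hAC s hs (x s)).trans ((le_abs_self _).trans (hM s hs))

theorem dotProduct_self_eq_sub_integral (hab : a ≤ b)
    (hx : ∀ s ∈ Icc a b, HasDerivAt x (-(A s *ᵥ x s)) s)
    (hq : IntervalIntegrable (fun s => x s ⬝ᵥ A s *ᵥ x s) volume a b) :
    x b ⬝ᵥ x b = x a ⬝ᵥ x a - 2 * ∫ s in a..b, x s ⬝ᵥ A s *ᵥ x s := by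
  have hV : ∀ s ∈ uIcc a b, HasDerivAt (fun s => ‖toLp 2 (x s)‖ ^ 2)
      (-2 * (x s ⬝ᵥ A s *ᵥ x s)) s := by
    intro s hs
    rw [uIcc_of_le hab] at hs
    convert (hx s hs).toLp.norm_sq using 1
    rw [EuclideanSpace.inner_toLp_toLp, star_trivial, neg_dotProduct, dotProduct_comm]
    ring
  have := intervalIntegral.integral_eq_sub_of_hasDerivAt hV (hq.const_mul (-2))
  rw [intervalIntegral.integral_const_mul, EuclideanSpace.norm_toLp_sq,
    EuclideanSpace.norm_toLp_sq] at this
  linarith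


theorem norm_toLp_sub_le_integral (hab : a ≤ b) (hA : ∀ s ∈ Icc a b, (A s).PosSemidef)
    (hAC : ∀ s ∈ Icc a b, ∀ v, v ⬝ᵥ A s *ᵥ v ≤ C * (v ⬝ᵥ v))
    (hx : ∀ s ∈ Icc a b, HasDerivAt x (-(A s *ᵥ x s)) s)
    (hq : IntervalIntegrable (fun s => x s ⬝ᵥ A s *ᵥ x s) volume a b) {s : ℝ} (hs : s ∈ Icc a b) :
    ‖toLp 2 (x s - x a)‖ ≤ √C * ∫ u in a..b, √(x u ⬝ᵥ A u *ᵥ x u) := by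
  have hsub : Icc a s ⊆ Icc a b := Icc_subset_Icc_right hs.2
  have hg := hq.sqrt
  calc ‖toLp 2 (x s - x a)‖ = ‖toLp 2 (x s) - toLp 2 (x a)‖ := by
        rw [WithLp.toLp_sub]
    _ ≤ ∫ u in a..s, √C * √(x u ⬝ᵥ A u *ᵥ x u) := by
        refine norm_sub_le_integral_of_norm_deriv_le_of_le hs.1
          (fun u hu => (hx u (hsub hu)).toLp.continuousAt.continuousWithinAt)
          (fun u hu => (hx u (hsub (Ioo_subset_Icc_self hu))).toLp.differentiableAt
            |>.differentiableWithinAt)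
          (ae_of_all _ fun u hu => ?_)
          ((hg.mono_set (by rwa [uIcc_of_le hs.1, uIcc_of_le hab])).const_mul _)
        have hu' := hsub (Ioo_subset_Icc_self hu)
        rw [(hx u hu').toLp.deriv, WithLp.toLp_neg, norm_neg]
        exact (hA u hu').norm_mulVec_le (hAC u hu') _
    _ ≤ √C * ∫ u in a..b, √(x u ⬝ᵥ A u *ᵥ x u) := by
        rw [intervalIntegral.integral_const_mul]
        gcongr
        exact intervalIntegral.integral_mono_interval le_rfl hs.1 hs.2
          (ae_of_all _ fun u => Real.sqrt_nonneg _) hg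

theorem sqrt_dotProduct_mulVec_le_add_integral (hab : a ≤ b) (hC : 0 ≤ C)
    (hA : ∀ s ∈ Icc a b, (A s).PosSemidef)
    (hAC : ∀ s ∈ Icc a b, ∀ v, v ⬝ᵥ A s *ᵥ v ≤ C * (v ⬝ᵥ v))
    (hx : ∀ s ∈ Icc a b, HasDerivAt x (-(A s *ᵥ x s)) s)
    (hq : IntervalIntegrable (fun s => x s ⬝ᵥ A s *ᵥ x s) volume a b) {s : ℝ} (hs : s ∈ Icc a b) :
    √(x a ⬝ᵥ A s *ᵥ x a) ≤
      √(x s ⬝ᵥ A s *ᵥ x s) + C * ∫ u in a..b, √(x u ⬝ᵥ A u *ᵥ x u) := by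
  calc √(x a ⬝ᵥ A s *ᵥ x a) ≤ √(x s ⬝ᵥ A s *ᵥ x s) + √C * ‖toLp 2 (x a - x s)‖ :=
        (hA s hs).sqrt_dotProduct_mulVec_le_add (hAC s hs) _ _
    _ ≤ √(x s ⬝ᵥ A s *ᵥ x s) + √C * (√C * ∫ u in a..b, √(x u ⬝ᵥ A u *ᵥ x u)) := by
        rw [← norm_neg, ← WithLp.toLp_neg, neg_sub]
        gcongr
        exact norm_toLp_sub_le_integral hab hA hAC hx hq hs
    _ = √(x s ⬝ᵥ A s *ᵥ x s) + C * ∫ u in a..b, √(x u ⬝ᵥ A u *ᵥ x u) := by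
        rw [← mul_assoc, Real.mul_self_sqrt hC]

theorem integral_dotProduct_mulVec_le (hab : a ≤ b) (hC : 0 ≤ C)
    (hA : ∀ s ∈ Icc a b, (A s).PosSemidef)
    (hAC : ∀ s ∈ Icc a b, ∀ v, v ⬝ᵥ A s *ᵥ v ≤ C * (v ⬝ᵥ v))
    (hx : ∀ s ∈ Icc a b, HasDerivAt x (-(A s *ᵥ x s)) s)
    (hq : IntervalIntegrable (fun s => x s ⬝ᵥ A s *ᵥ x s) volume a b) :
    ∫ s in a..b, x a ⬝ᵥ A s *ᵥ x a ≤ (1 + C * (b - a)) ^ 2 * ∫ s in a..b, x s ⬝ᵥ A s *ᵥ x s := by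
  set g : ℝ → ℝ := fun s => √(x s ⬝ᵥ A s *ᵥ x s)
  set I := ∫ s in a..b, g s
  have hg_sq : EqOn (fun s => g s ^ 2) (fun s => x s ⬝ᵥ A s *ᵥ x s) (uIcc a b) := fun s hs =>
    Real.sq_sqrt (by simpa using (hA s (uIcc_of_le hab ▸ hs)).dotProduct_mulVec_nonneg (x s))
  have hg : IntervalIntegrable g volume a b := hq.sqrt
  have hg2 : IntervalIntegrable (fun s => g s ^ 2) volume a b :=
    hq.congr_ae (ae_restrict_of_forall_mem measurableSet_uIoc fun s hs =>
      (hg_sq (uIoc_subset_uIcc hs)).symm)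
  have hpoint : ∀ s ∈ Ioc a b, x a ⬝ᵥ A s *ᵥ x a ≤ g s ^ 2 + 2 * (C * I) * g s + (C * I) ^ 2 := by
    intro s hs
    have hI : 0 ≤ I := intervalIntegral.integral_nonneg hab fun u _ => Real.sqrt_nonneg _
    have h := sqrt_dotProduct_mulVec_le_add_integral hab hC hA hAC hx hq (Ioc_subset_Icc_self hs)
    calc x a ⬝ᵥ A s *ᵥ x a ≤ (g s + C * I) ^ 2 := (Real.sqrt_le_left (by positivity)).mp h
      _ = g s ^ 2 + 2 * (C * I) * g s + (C * I) ^ 2 := by ring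
  have hCS : I ^ 2 ≤ (b - a) * ∫ s in a..b, g s ^ 2 := intervalIntegral.sq_integral_le hab hg hg2
  calc ∫ s in a..b, x a ⬝ᵥ A s *ᵥ x a
      ≤ ∫ s in a..b, (g s ^ 2 + 2 * (C * I) * g s + (C * I) ^ 2) := by
        simp only [intervalIntegral.integral_of_le hab]
        refine integral_mono_of_nonneg (ae_restrict_of_forall_mem measurableSet_Ioc fun s hs => ?_)
          ((hg2.add (hg.const_mul _)).add intervalIntegrable_const).1
          (ae_restrict_of_forall_mem measurableSet_Ioc hpoint)
        simpa using (hA s (Ioc_subset_Icc_self hs)).dotProduct_mulVec_nonneg (x a)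
    _ = (∫ s in a..b, g s ^ 2) + 2 * C * I ^ 2 + C ^ 2 * (b - a) * I ^ 2 := by
        rw [intervalIntegral.integral_sq_add_mul_add_const hg hg2]
        ring
    _ ≤ (1 + C * (b - a)) ^ 2 * ∫ s in a..b, g s ^ 2 := by
        have h1 := mul_le_mul_of_nonneg_left hCS (by positivity : (0 : ℝ) ≤ 2 * C)
        have h2 := mul_le_mul_of_nonneg_left hCS
          (by have := sub_nonneg.mpr hab; positivity : (0 : ℝ) ≤ C ^ 2 * (b - a))
        nlinarith
    _ = (1 + C * (b - a)) ^ 2 * ∫ s in a..b, x s ⬝ᵥ A s *ᵥ x s := by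
        rw [intervalIntegral.integral_congr hg_sq]

end LinearODE

theorem window_contraction_general (b : ℕ) (t₀ α₁ T₁ Φbar : ℝ)
    (hT₁ : 0 < T₁) (hΦbar : 0 ≤ Φbar)
    (Φ : ℝ → Matrix (Fin b) (Fin b) ℝ)
    (hpsd : ∀ t, t₀ ≤ t → (Φ t).PosSemidef)
    (hmeas : ∀ i j, Measurable fun t => Φ t i j)
    (hbd : ∀ t, t₀ ≤ t → ∀ v : Fin b → ℝ,
      v ⬝ᵥ (Φ t).mulVec v ≤ Φbar * (v ⬝ᵥ v))
    (hPE : ∀ t, t₀ ≤ t →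
      (Matrix.of (fun i j => ∫ s in t..(t + T₁), Φ s i j) -
        α₁ • (1 : Matrix (Fin b) (Fin b) ℝ)).PosSemidef)
    (x : ℝ → Fin b → ℝ)
    (hx : ∀ t, t₀ ≤ t → HasDerivAt x (-(Φ t).mulVec (x t)) t) :
    ∀ t, t₀ ≤ t →
      ∑ i, (x (t + T₁) i) ^ 2 ≤
        (1 - 2 * α₁ / (1 + Φbar * T₁) ^ 2) * ∑ i, (x t i) ^ 2 := by
  intro t ht
  have hab : t ≤ t + T₁ := by linarith
  have hpsd' : ∀ s ∈ Icc t (t + T₁), (Φ s).PosSemidef := fun s hs => hpsd s (ht.trans hs.1)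
  have hbd' : ∀ s ∈ Icc t (t + T₁), ∀ v, v ⬝ᵥ Φ s *ᵥ v ≤ Φbar * (v ⬝ᵥ v) := fun s hs =>
    hbd s (ht.trans hs.1)
  have hx' : ∀ s ∈ Icc t (t + T₁), HasDerivAt x (-(Φ s *ᵥ x s)) s := fun s hs =>
    hx s (ht.trans hs.1)
  have hq := intervalIntegrable_dotProduct_mulVec hab hpsd' hbd' hmeas fun s hs =>
    (hx' s hs).continuousAt.continuousWithinAt
  have hentries : ∀ i j, IntervalIntegrable (fun s => Φ s i j) volume t (t + T₁) := fun i j =>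
    .of_bound hab (hmeas i j).aestronglyMeasurable fun s hs =>
      (hpsd' s hs).abs_apply_le (hbd' s hs) i j
  have hexcite : α₁ * (x t ⬝ᵥ x t) ≤ ∫ s in t..t + T₁, x t ⬝ᵥ Φ s *ᵥ x t := by
    rw [intervalIntegral.integral_dotProduct_mulVec hentries]
    exact (hPE t ht).mul_dotProduct_self_le _
  have hspread := integral_dotProduct_mulVec_le hab hΦbar hpsd' hbd' hx' hq
  rw [add_sub_cancel_left] at hspread
  have hK : α₁ * (x t ⬝ᵥ x t) / (1 + Φbar * T₁) ^ 2 ≤ ∫ s in t..t + T₁, x s ⬝ᵥ Φ s *ᵥ x s :=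
    (div_le_iff₀' (by positivity)).mpr (hexcite.trans hspread)
  have hsq (v : Fin b → ℝ) : ∑ i, v i ^ 2 = v ⬝ᵥ v := by simp [dotProduct, sq]
  rw [hsq, hsq, dotProduct_self_eq_sub_integral hab hx' hq]
  calc x t ⬝ᵥ x t - 2 * ∫ s in t..t + T₁, x s ⬝ᵥ Φ s *ᵥ x s
      ≤ x t ⬝ᵥ x t - 2 * (α₁ * (x t ⬝ᵥ x t) / (1 + Φbar * T₁) ^ 2) := by linarith
    _ = (1 - 2 * α₁ / (1 + Φbar * T₁) ^ 2) * (x t ⬝ᵥ x t) := by ring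

/-- one-window contraction for `ẋ = −Φ(t)x` under persistent
excitation: `‖x(t+T₁)‖² ≤ (1 − 2α₁/(1+Φ̄T₁)²)‖x(t)‖²`. -/
theorem window_contraction (b : ℕ) (t₀ α₁ T₁ Φbar : ℝ)
    (hα₁ : 0 < α₁) (hT₁ : 0 < T₁) (hΦbar : 0 ≤ Φbar)
    (Φ : ℝ → Matrix (Fin b) (Fin b) ℝ)
    (hsymm : ∀ t, t₀ ≤ t → (Φ t).IsSymm)
    (hpsd : ∀ t, t₀ ≤ t → (Φ t).PosSemidef)
    (hmeas : ∀ i j, Measurable fun t => Φ t i j)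
    (hbd : ∀ t, t₀ ≤ t → ∀ v : Fin b → ℝ,
      v ⬝ᵥ (Φ t).mulVec v ≤ Φbar * (v ⬝ᵥ v))
    (hPE : ∀ t, t₀ ≤ t →
      (Matrix.of (fun i j => ∫ s in t..(t + T₁), Φ s i j) -
        α₁ • (1 : Matrix (Fin b) (Fin b) ℝ)).PosSemidef)
    (x : ℝ → Fin b → ℝ)
    (hx : ∀ t, t₀ ≤ t → HasDerivAt x (-(Φ t).mulVec (x t)) t) :
    ∀ t, t₀ ≤ t →
      ∑ i, (x (t + T₁) i) ^ 2 ≤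
        (1 - 2 * α₁ / (1 + Φbar * T₁) ^ 2) * ∑ i, (x t i) ^ 2 :=
  window_contraction_general b t₀ α₁ T₁ Φbar hT₁ hΦbar Φ hpsd hmeas hbd hPE x hx
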